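/- arXiv:1611.00432 — 3 statements merged into one kernel-verified Lean document; each statement's English description precedes it below -/
import Mathlib

section
/- Let A, B, C each be the infinite dihedral-type presentation ⟨x₁,x₂ ∣ x₁², x₂², (x₁x₂)²⟩, i.e. each isomorphic to Z/2 × Z/2. Let φ : A * B → C be the homomorphism of the free product defined by φ(a₁)=φ(b₁)=c₁ and φ(a₂)=φ(b₂)=c₂. Then the kernel of φ is a free group of rank 3, generated by x = a₁b₁, y = a₂b₂, and z = a₁a₂b₂a₁. -/
open Monoid

/-- The Klein four-group `Z/2 × Z/2`, written multiplicatively. -/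
abbrev Klein : Type := Multiplicative (ZMod 2 × ZMod 2)

/-- First generator `c₁` of the Klein four-group. -/
def c₁ : Klein := Multiplicative.ofAdd (1, 0)

/-- Second generator `c₂` of the Klein four-group. -/
def c₂ : Klein := Multiplicative.ofAdd (0, 1)

/-- The homomorphism `φ : A * B → C` (with `A = B = C = Klein`) determined by
`φ(a₁) = φ(b₁) = c₁` and `φ(a₂) = φ(b₂) = c₂`: it is the lift of the identity on
both free factors. -/
def phi : Coprod Klein Klein →* Klein :=
  Coprod.lift (MonoidHom.id Klein) (MonoidHom.id Klein)

/-- `a₁ = inl c₁`, `a₂ = inl c₂`, `b₁ = inr c₁`, `b₂ = inr c₂` in the free product. -/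
def a₁ : Coprod Klein Klein := Coprod.inl c₁
def a₂ : Coprod Klein Klein := Coprod.inl c₂
def b₁ : Coprod Klein Klein := Coprod.inr c₁
def b₂ : Coprod Klein Klein := Coprod.inr c₂

/-!
Conjugation by `a₁` and `a₂` preserves the subgroup generated by `x = a₁b₁`, `y = a₂b₂`,
`z = a₁a₂b₂a₁`: `a₁` sends `x, y, z` to `x⁻¹, z, y` and `a₂` sends them to `zxy⁻¹, y⁻¹, z⁻¹`.
Hence `A` acts on the free group `F₃ = ⟨x, y, z⟩`, and `F₃ ⋊ A → A * B` is defined by sending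
`x, y, z` to their namesakes and `A` identically. Its inverse is the identity on `A` and sends
`b₁ ↦ x⁻¹a₁`, `b₂ ↦ y⁻¹a₂`. Under this isomorphism `φ` becomes the projection onto `A`, whose
kernel is `F₃`.
-/

section KleinLift

variable {M : Type*} [Monoid M]

lemma pow_zmod_two_val_add {u : M} (hu : u * u = 1) (i j : ZMod 2) :
    u ^ (i + j).val = u ^ i.val * u ^ j.val := by
  rw [ZMod.val_add, ← pow_eq_pow_mod _ (by rwa [sq]), pow_add]

def Klein.lift (u v : M) (hu : u * u = 1) (hv : v * v = 1) (huv : Commute u v) :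
    Klein →* M where
  toFun c := u ^ c.toAdd.1.val * v ^ c.toAdd.2.val
  map_one' := by simp
  map_mul' p q := by
    simp only [toAdd_mul, Prod.fst_add, Prod.snd_add, pow_zmod_two_val_add hu,
      pow_zmod_two_val_add hv, (huv.pow_pow _ _).mul_mul_mul_comm]

variable {u v : M} {hu : u * u = 1} {hv : v * v = 1} {huv : Commute u v}

@[simp] lemma Klein.lift_c₁ : Klein.lift u v hu hv huv c₁ = u := by
  simp [Klein.lift, c₁, ZMod.val_one]

@[simp] lemma Klein.lift_c₂ : Klein.lift u v hu hv huv c₂ = v := by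
  simp [Klein.lift, c₂, ZMod.val_one]

lemma Klein.eq_one_or_c₁_or_c₂_or_c₁_mul_c₂ (c : Klein) :
    c = 1 ∨ c = c₁ ∨ c = c₂ ∨ c = c₁ * c₂ := by
  revert c; decide

lemma Klein.hom_ext {f g : Klein →* M} (h₁ : f c₁ = g c₁) (h₂ : f c₂ = g c₂) : f = g := by
  refine MonoidHom.ext fun c => ?_
  rcases Klein.eq_one_or_c₁_or_c₂_or_c₁_mul_c₂ c with rfl | rfl | rfl | rfl <;> simp [h₁, h₂]

end KleinLift

@[simp] lemma Klein.mul_self (c : Klein) : c * c = 1 := by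
  revert c; decide

lemma Klein.inv_eq_self (c : Klein) : c⁻¹ = c :=
  inv_eq_of_mul_eq_one_left (Klein.mul_self c)

@[simp] lemma Klein.mul_mul_cancel_left (c d : Klein) : c * (c * d) = d := by
  rw [← mul_assoc, Klein.mul_self, one_mul]

section FreeProductWords

open Coprod

variable (c : Klein) (w : Coprod Klein Klein)

@[simp] lemma Klein.inl_inv : (inl c : Coprod Klein Klein)⁻¹ = inl c := by
  rw [← map_inv, Klein.inv_eq_self]

@[simp] lemma Klein.inr_inv : (inr c : Coprod Klein Klein)⁻¹ = inr c := by
  rw [← map_inv, Klein.inv_eq_self]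

@[simp] lemma Klein.inl_mul_self : (inl c : Coprod Klein Klein) * inl c = 1 := by
  rw [← map_mul, Klein.mul_self, map_one]

@[simp] lemma Klein.inl_mul_inl_mul_cancel : (inl c : Coprod Klein Klein) * (inl c * w) = w := by
  rw [← mul_assoc, Klein.inl_mul_self, one_mul]

@[simp] lemma Klein.inr_mul_inr_mul_cancel : (inr c : Coprod Klein Klein) * (inr c * w) = w := by
  rw [← mul_assoc, ← map_mul, Klein.mul_self, map_one, one_mul]

@[simp] lemma Klein.inl_c₂_mul_inl_c₁ :
    (inl c₂ : Coprod Klein Klein) * inl c₁ = inl c₁ * inl c₂ := by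
  rw [← map_mul, ← map_mul, mul_comm]

@[simp] lemma Klein.inl_c₂_mul_inl_c₁_mul :
    (inl c₂ : Coprod Klein Klein) * (inl c₁ * w) = inl c₁ * (inl c₂ * w) := by
  rw [← mul_assoc, ← mul_assoc, Klein.inl_c₂_mul_inl_c₁]

@[simp] lemma Klein.inr_c₂_mul_inr_c₁_mul :
    (inr c₂ : Coprod Klein Klein) * (inr c₁ * w) = inr c₁ * (inr c₂ * w) := by
  rw [← mul_assoc, ← mul_assoc, ← map_mul, ← map_mul, mul_comm]

end FreeProductWords

def MulAut.ofInvolutive {G : Type*} [Group G] (f : G →* G) (hf : f.comp f = .id G) :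
    MulAut G :=
  f.toMulEquiv f hf hf

lemma MulAut.ofInvolutive_mul_self {G : Type*} [Group G] (f : G →* G) (hf : f.comp f = .id G) :
    ofInvolutive f hf * ofInvolutive f hf = 1 :=
  MulEquiv.ext (DFunLike.congr_fun hf ·)

lemma SemidirectProduct.range_comp_inl_eq_ker {N G H : Type*} [Group N] [Group G] [Group H]
    {σ : G →* MulAut N} (e : N ⋊[σ] G ≃* H) :
    (e.toMonoidHom.comp inl).range = (rightHom.comp e.symm.toMonoidHom).ker := by
  rw [MonoidHom.range_comp, range_inl_eq_ker_rightHom, Subgroup.map_equiv_eq_comap_symm',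
    MonoidHom.comap_ker]

local notation "F₃" => FreeGroup (Fin 3)

open FreeGroup (of)

-- `x = of 0`, `y = of 1`, `z = of 2`
def conjA₁ : F₃ →* F₃ := FreeGroup.lift ![(of 0)⁻¹, of 2, of 1]

def conjA₂ : F₃ →* F₃ := FreeGroup.lift ![of 2 * of 0 * (of 1)⁻¹, (of 1)⁻¹, (of 2)⁻¹]

lemma conjA₁_comp_self : conjA₁.comp conjA₁ = .id F₃ :=
  FreeGroup.ext_hom _ _ fun i => by fin_cases i <;> simp [conjA₁]

lemma conjA₂_comp_self : conjA₂.comp conjA₂ = .id F₃ :=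
  FreeGroup.ext_hom _ _ fun i => by fin_cases i <;> simp [conjA₂, mul_assoc]

lemma commute_ofInvolutive_conjA₁_conjA₂ :
    Commute (MulAut.ofInvolutive conjA₁ conjA₁_comp_self)
      (MulAut.ofInvolutive conjA₂ conjA₂_comp_self) :=
  MulEquiv.toMonoidHom_injective <| FreeGroup.ext_hom _ _ fun i => by
    fin_cases i <;> simp [MulAut.ofInvolutive, conjA₁, conjA₂, mul_assoc]

def kleinAction : Klein →* MulAut F₃ :=
  Klein.lift (.ofInvolutive conjA₁ conjA₁_comp_self) (.ofInvolutive conjA₂ conjA₂_comp_self)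
    (MulAut.ofInvolutive_mul_self _ _) (MulAut.ofInvolutive_mul_self _ _)
    commute_ofInvolutive_conjA₁_conjA₂

@[simp] lemma kleinAction_c₁ (n : F₃) : kleinAction c₁ n = conjA₁ n := by
  simp [kleinAction, MulAut.ofInvolutive]

@[simp] lemma kleinAction_c₂ (n : F₃) : kleinAction c₂ n = conjA₂ n := by
  simp [kleinAction, MulAut.ofInvolutive]

def kernelBasis : F₃ →* Coprod Klein Klein :=
  FreeGroup.lift ![a₁ * b₁, a₂ * b₂, a₁ * a₂ * b₂ * a₁]

lemma kernelBasis_comp_kleinAction (c : Klein) :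
    kernelBasis.comp (kleinAction c).toMonoidHom =
      (MulAut.conj (Coprod.inl c)).toMonoidHom.comp kernelBasis := by
  rcases Klein.eq_one_or_c₁_or_c₂_or_c₁_mul_c₂ c with rfl | rfl | rfl | rfl <;>
    refine FreeGroup.ext_hom _ _ fun i => ?_ <;> fin_cases i <;>
      simp [kernelBasis, conjA₁, conjA₂, a₁, a₂, b₁, b₂, mul_assoc]

local notation "G" => F₃ ⋊[kleinAction] Klein

open SemidirectProduct

def semidirectToFreeProduct : G →* Coprod Klein Klein :=
  SemidirectProduct.lift kernelBasis Coprod.inl kernelBasis_comp_kleinAction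

def freeProductToSemidirect : Coprod Klein Klein →* G :=
  Coprod.lift inr <| Klein.lift ⟨(of 0)⁻¹, c₁⟩ ⟨(of 1)⁻¹, c₂⟩
    (by apply SemidirectProduct.ext <;> simp [mul_left, mul_right, conjA₁])
    (by apply SemidirectProduct.ext <;> simp [mul_left, mul_right, conjA₂])
    (by
      apply SemidirectProduct.ext <;>
        simp [mul_left, mul_right, conjA₁, conjA₂, mul_assoc, mul_comm c₁])

lemma freeProductToSemidirect_comp_semidirectToFreeProduct :
    freeProductToSemidirect.comp semidirectToFreeProduct = .id G := by
  refine SemidirectProduct.hom_ext (FreeGroup.ext_hom _ _ fun i => ?_) (Klein.hom_ext ?_ ?_)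
  · fin_cases i <;> apply SemidirectProduct.ext <;>
      simp [freeProductToSemidirect, semidirectToFreeProduct, kernelBasis, a₁, a₂, b₁, b₂,
        mul_left, mul_right, conjA₁, conjA₂, mul_assoc]
  all_goals simp [freeProductToSemidirect, semidirectToFreeProduct]

lemma semidirectToFreeProduct_comp_freeProductToSemidirect :
    semidirectToFreeProduct.comp freeProductToSemidirect = .id (Coprod Klein Klein) := by
  refine Coprod.hom_ext (Klein.hom_ext ?_ ?_) (Klein.hom_ext ?_ ?_) <;>
    simp [freeProductToSemidirect, semidirectToFreeProduct, kernelBasis, a₁, a₂, b₁, b₂, mul_assoc]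

def semidirectEquivFreeProduct : G ≃* Coprod Klein Klein :=
  semidirectToFreeProduct.toMulEquiv freeProductToSemidirect
    freeProductToSemidirect_comp_semidirectToFreeProduct
    semidirectToFreeProduct_comp_freeProductToSemidirect

lemma semidirectEquivFreeProduct_comp_inl :
    semidirectEquivFreeProduct.toMonoidHom.comp inl = kernelBasis :=
  lift_comp_inl _ _ kernelBasis_comp_kleinAction

lemma phi_eq_rightHom_comp_semidirectEquivFreeProduct_symm :
    phi = rightHom.comp semidirectEquivFreeProduct.symm.toMonoidHom := by
  refine Coprod.hom_ext (Klein.hom_ext ?_ ?_) (Klein.hom_ext ?_ ?_) <;>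
    simp [phi, semidirectEquivFreeProduct, freeProductToSemidirect]

/-- The kernel of `φ : A * B → C` is a free group of rank 3, with basis
`x = a₁b₁`, `y = a₂b₂`, `z = a₁a₂b₂a₁`: the homomorphism from the free group on
three generators sending them to `x, y, z` is injective and has range exactly `ker φ`. -/
theorem kernel_phi_free_of_rank_three :
    Function.Injective
      (FreeGroup.lift (![a₁ * b₁, a₂ * b₂, a₁ * a₂ * b₂ * a₁] : Fin 3 → Coprod Klein Klein)) ∧
    (FreeGroup.lift (![a₁ * b₁, a₂ * b₂, a₁ * a₂ * b₂ * a₁] : Fin 3 → Coprod Klein Klein)).range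
      = phi.ker := by
  change Function.Injective kernelBasis ∧ kernelBasis.range = phi.ker
  rw [← semidirectEquivFreeProduct_comp_inl, phi_eq_rightHom_comp_semidirectEquivFreeProduct_symm]
  exact ⟨semidirectEquivFreeProduct.injective.comp inl_injective, range_comp_inl_eq_ker _⟩
end

section
/- In the free product A * B of two copies of the Klein four-group, the elements x = a₁b₁ and y = a₂b₂ generate a free subgroup of rank 2. -/
open Monoid

/-!
The free product acts on its reduced words. Given nontrivial elements `s k` of one factor and
`t k` of the other, with `s` and `t` injective, let `X k` be the words beginning with the letter
`s k` and `Y k` those beginning with `(t k)⁻¹`. These sets are pairwise disjoint, `s k * t k` maps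
every word outside `Y k` into `X k`, and its inverse maps every word outside `X k` into `Y k`, so
by the ping-pong lemma the `s k * t k` generate freely. Here `x = a₁b₁` and `y = a₂b₂` come from
`s = t = ![c₁, c₂]`.
-/

open Function

universe u v

namespace Monoid.CoprodI

namespace Word

section Monoid

variable {ι : Type*} [DecidableEq ι] {M : ι → Type*} [∀ i, Monoid (M i)] [∀ i, DecidableEq (M i)]

theorem toList_head?_of_smul_of_fstIdx_ne {i : ι} {m : M i} (hm : m ≠ 1) {w : Word M}
    (hw : w.fstIdx ≠ some i) : (of m • w).toList.head? = some ⟨i, m⟩ := by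
  rw [of_smul_def, equivPair_eq_of_fstIdx_ne hw]
  simp [rcons, cons, hm]

theorem equivPair_head_of_toList_head?_eq {i : ι} {m : M i} {w : Word M}
    (hw : w.toList.head? = some ⟨i, m⟩) : (equivPair i w).head = m := by
  rcases w with ⟨_ | ⟨⟨i', m'⟩, l⟩, _, _⟩
  · simp at hw
  · simp only [List.head?_cons, Option.some_inj, Sigma.mk.inj_iff] at hw
    obtain ⟨rfl, hm⟩ := hw
    cases hm
    simp [equivPair_head]

theorem toList_head?_of_smul_of_toList_head?_eq {i : ι} {m m' : M i} (hmm' : m * m' ≠ 1)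
    {w : Word M} (hw : w.toList.head? = some ⟨i, m'⟩) :
    (of m • w).toList.head? = some ⟨i, m * m'⟩ := by
  rw [← equivPair_head_smul_equivPair_tail (i := i) w, equivPair_head_of_toList_head?_eq hw,
    ← mul_smul, ← map_mul]
  exact toList_head?_of_smul_of_fstIdx_ne hmm' (equivPair i w).fstIdx_ne

end Monoid

variable {ι : Type*} [DecidableEq ι] {G : ι → Type*} [∀ i, Group (G i)] [∀ i, DecidableEq (G i)]

theorem fstIdx_of_smul {i : ι} {m : G i} (hm : m ≠ 1) {w : Word G}
    (hw : w.toList.head? ≠ some ⟨i, m⁻¹⟩) : (of m • w).fstIdx = some i := by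
  by_cases h : ∃ m', w.toList.head? = some ⟨i, m'⟩
  · obtain ⟨m', hm'⟩ := h
    have hmm' : m * m' ≠ 1 := fun h1 => hw (by rw [hm', eq_inv_of_mul_eq_one_right h1])
    simp [fstIdx, toList_head?_of_smul_of_toList_head?_eq hmm' hm']
  · have hfst : w.fstIdx ≠ some i := by
      rw [fstIdx_ne_iff]
      rintro ⟨j, m'⟩ hj rfl
      exact h ⟨m', hj⟩
    simp [fstIdx, toList_head?_of_smul_of_fstIdx_ne hm hfst]

theorem toList_head?_of_mul_of_smul {i j : ι} (hij : i ≠ j) {s : G i} {t : G j} (hs : s ≠ 1)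
    (ht : t ≠ 1) {w : Word G} (hw : w.toList.head? ≠ some ⟨j, t⁻¹⟩) :
    ((of s * of t) • w).toList.head? = some ⟨i, s⟩ := by
  rw [mul_smul]
  refine toList_head?_of_smul_of_fstIdx_ne hs ?_
  rw [fstIdx_of_smul ht hw]
  exact fun h => hij (Option.some_injective _ h).symm

end Word

open Word

theorem injective_freeGroupLift_of_mul_of {ι : Type u} {κ : Type (max u v)} {G : ι → Type v}
    [∀ i, Group (G i)] [Nontrivial κ] {i j : ι} (hij : i ≠ j) {s : κ → G i} {t : κ → G j}
    (hs : Injective s) (ht : Injective t) (hs1 : ∀ k, s k ≠ 1) (ht1 : ∀ k, t k ≠ 1) :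
    Injective (FreeGroup.lift fun k => (of (s k) * of (t k) : CoprodI G)) := by
  classical
  apply FreeGroup.injective_lift_of_ping_pong _
    (fun k => {w : Word G | w.toList.head? = some ⟨i, s k⟩})
    (fun k => {w : Word G | w.toList.head? = some ⟨j, (t k)⁻¹⟩})
  · exact fun k => ⟨of (s k) • empty,
      toList_head?_of_smul_of_fstIdx_ne (hs1 k) (by simp [fstIdx, empty])⟩
  · exact fun k l hkl => Set.disjoint_left.2 fun w hk hl =>
      hkl (hs (sigma_mk_injective (Option.some_injective _ (hk.symm.trans hl))))
  · exact fun k l hkl => Set.disjoint_left.2 fun w hk hl =>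
      hkl (ht (inv_injective (sigma_mk_injective (Option.some_injective _ (hk.symm.trans hl)))))
  · exact fun k l => Set.disjoint_left.2 fun w hk hl =>
      hij (congrArg Sigma.fst (Option.some_injective _ (hk.symm.trans hl)))
  · rintro k _ ⟨w, hw, rfl⟩
    exact toList_head?_of_mul_of_smul hij (hs1 k) (ht1 k) hw
  · rintro k _ ⟨w, hw, rfl⟩
    rw [Pi.inv_apply, mul_inv_rev, ← map_inv, ← map_inv]
    exact toList_head?_of_mul_of_smul hij.symm (inv_ne_one.2 (ht1 k)) (inv_ne_one.2 (hs1 k))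
      (by rwa [inv_inv])

end Monoid.CoprodI

theorem Monoid.Coprod.injective_freeGroupLift_inl_mul_inr {M N κ : Type u} [Group M] [Group N]
    [Nontrivial κ] {s : κ → M} {t : κ → N} (hs : Injective s) (ht : Injective t)
    (hs1 : ∀ k, s k ≠ 1) (ht1 : ∀ k, t k ≠ 1) :
    Injective (FreeGroup.lift fun k => (inl (s k) * inr (t k) : Coprod M N)) := by
  -- Reduced words are only available for `CoprodI`, so `M ∗ N` is mapped to the product over `Bool`.
  let G : Bool → Type u := fun b => cond b M N
  let _ : ∀ b, Group (G b) := fun b => match b with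
    | true => ‹Group M›
    | false => ‹Group N›
  let f : Coprod M N →* CoprodI G :=
    Coprod.lift (CoprodI.of (M := G) (i := true)) (CoprodI.of (M := G) (i := false))
  have hf : f.comp (FreeGroup.lift fun k => inl (s k) * inr (t k)) =
      FreeGroup.lift fun k => CoprodI.of (i := true) (s k) * CoprodI.of (i := false) (t k) := by
    ext k
    simp [f]
  have hinj := CoprodI.injective_freeGroupLift_of_mul_of (G := G) (i := true) (j := false)
    Bool.noConfusion hs ht hs1 ht1
  rw [← hf, MonoidHom.coe_comp] at hinj
  exact hinj.of_comp

/-- In the free product of two Klein four-groups, the elements `x = a₁b₁` and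
`y = a₂b₂` generate a free subgroup of rank 2: the homomorphism from the free
group on two generators sending them to `x, y` is injective, and its range is
the subgroup generated by `x` and `y`. -/
theorem x_y_generate_free_rank_two :
    Function.Injective
      (FreeGroup.lift (![a₁ * b₁, a₂ * b₂] : Fin 2 → Coprod Klein Klein)) ∧
    (FreeGroup.lift (![a₁ * b₁, a₂ * b₂] : Fin 2 → Coprod Klein Klein)).range
      = Subgroup.closure {a₁ * b₁, a₂ * b₂} := by
  have hc : Injective ![c₁, c₂] := by decide
  have hc1 : ∀ k, ![c₁, c₂] k ≠ 1 := by decide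
  refine ⟨?_, ?_⟩
  · convert Coprod.injective_freeGroupLift_inl_mul_inr hc hc hc1 hc1 using 3
    funext k
    fin_cases k <;> rfl
  · rw [FreeGroup.range_lift_eq_closure, Matrix.range_cons_cons_empty]
end

section
/- In the free product A * B of two Klein four-groups A = ⟨a₁,a₂⟩ and B = ⟨b₁,b₂⟩, the element z = a₁·(a₂b₂)·a₁ equals the conjugate a₁ y a₁⁻¹ of y = a₂b₂ by a₁, and z ∉ ⟨x, y⟩, where x = a₁b₁ and y = a₂b₂. -/
open Monoid

namespace ZProof

abbrev P := Equiv.Perm (Fin 6)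

def A1 : P := Equiv.swap 2 3 * Equiv.swap 4 5
def A2 : P := Equiv.swap 2 4 * Equiv.swap 3 5
def B1 : P := Equiv.swap 1 2 * Equiv.swap 4 5
def B2 : P := Equiv.swap 1 5 * Equiv.swap 2 4

def fA : Klein →* P :=
  MonoidHom.mk' (fun g => A1 ^ (g.toAdd.1.val) * A2 ^ (g.toAdd.2.val)) (by decide)

def fB : Klein →* P :=
  MonoidHom.mk' (fun g => B1 ^ (g.toAdd.1.val) * B2 ^ (g.toAdd.2.val)) (by decide)

def F : Coprod Klein Klein →* P := Coprod.lift fA fB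

lemma Fa₁ : F a₁ = A1 := by
  rw [a₁, F, Coprod.lift_apply_inl]; decide
lemma Fa₂ : F a₂ = A2 := by
  rw [a₂, F, Coprod.lift_apply_inl]; decide
lemma Fb₁ : F b₁ = B1 := by
  rw [b₁, F, Coprod.lift_apply_inr]; decide
lemma Fb₂ : F b₂ = B2 := by
  rw [b₂, F, Coprod.lift_apply_inr]; decide

end ZProof

/-- `z = a₁·(a₂b₂)·a₁` equals the conjugate `a₁ y a₁⁻¹` of `y = a₂b₂` by `a₁`,
and `z` does not lie in the subgroup generated by `x = a₁b₁` and `y = a₂b₂`. -/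
theorem z_is_conjugate_and_not_in_closure_xy :
    a₁ * a₂ * b₂ * a₁ = a₁ * (a₂ * b₂) * a₁⁻¹ ∧
    a₁ * a₂ * b₂ * a₁ ∉ Subgroup.closure {a₁ * b₁, a₂ * b₂} := by
  constructor
  · have hc : c₁⁻¹ = c₁ := by decide
    have h : a₁⁻¹ = a₁ := by
      rw [a₁, ← map_inv (Coprod.inl : Klein →* Coprod Klein Klein), hc]
    rw [h, mul_assoc a₁ a₂ b₂]
  · intro hmem
    open ZProof in
    have h1 : F (a₁ * a₂ * b₂ * a₁) ∈ Subgroup.closure (F '' ({a₁ * b₁, a₂ * b₂} : Set _)) := by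
      rw [← MonoidHom.map_closure]
      exact Subgroup.mem_map_of_mem F hmem
    have himg : (F '' ({a₁ * b₁, a₂ * b₂} : Set (Coprod Klein Klein)))
        = {A1 * B1, A2 * B2} := by
      rw [Set.image_insert_eq, Set.image_singleton, map_mul, map_mul, Fa₁, Fb₁, Fa₂, Fb₂]
    rw [himg] at h1
    have hstab : Subgroup.closure ({A1 * B1, A2 * B2} : Set P)
        ≤ MulAction.stabilizer P (4 : Fin 6) := by
      rw [Subgroup.closure_le]
      rintro g (rfl | rfl) <;> · show _ • (4 : Fin 6) = 4; decide
    have h2 := hstab h1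
    rw [map_mul, map_mul, map_mul, Fa₁, Fa₂, Fb₂] at h2
    have : (A1 * A2 * B2 * A1) • (4 : Fin 6) = 4 := h2
    revert this
    decide
end
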